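/- arXiv:1507.01431 — 2 statements merged into one kernel-verified Lean document; each statement's English description precedes it below -/
import Mathlib

section
/- For every 2-homogeneous polynomial P(x,y) = a·x² + b·xy + c·y² with real coefficients, |a| + |b| + |c| ≤ (1 + √2) · ‖P‖_∞, where ‖P‖_∞ = sup{|P(x,y)| : |x| ≤ 1, |y| ≤ 1}. The constant 1 + √2 is optimal, attained by P(x,y) = ((2+√2)/4)x² − ((2+√2)/4)y² + (√2/2)xy. -/
/-!
Write `S = supNormInf a b c` and `t = √2 - 1`. Besides `P(1, ±1) = a ± b + c`, the differences
`P(1, ±t) - P(t, ∓1) = (1 - t²)(a - c) ± 2tb = 2t (a - c ± b)` are bounded by `2S`, and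
`1 / t = 1 + √2`. So all four sign combinations `|a ± b ± c|` are at most `(1 + √2) S`, and
their maximum is `|a| + |b| + |c|`.

For the extremal polynomial `P`, the forms `x² - P` and `y² + P` are positive multiples of
perfect squares, so `|P| ≤ 1` on the square, with equality at `(1, √2 - 1)`.
-/

/-- Sup norm of `a·x² + b·xy + c·y²` over the unit ball of `ℓ∞²`. -/
noncomputable def supNormInf (a b c : ℝ) : ℝ :=
  sSup {z : ℝ | ∃ x y : ℝ, |x| ≤ 1 ∧ |y| ≤ 1 ∧ z = |a * x ^ 2 + b * x * y + c * y ^ 2|}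

open Real

lemma abs_add_abs_add_abs_le_of_abs_le {a b c M : ℝ} (h₁ : |a + b + c| ≤ M)
    (h₂ : |a - b + c| ≤ M) (h₃ : |a + b - c| ≤ M) (h₄ : |a - b - c| ≤ M) :
    |a| + |b| + |c| ≤ M := by
  rw [abs_le] at h₁ h₂ h₃ h₄
  rcases abs_cases a with ⟨ha, _⟩ | ⟨ha, _⟩ <;> rcases abs_cases b with ⟨hb, _⟩ | ⟨hb, _⟩ <;>
    rcases abs_cases c with ⟨hc, _⟩ | ⟨hc, _⟩ <;> rw [ha, hb, hc] <;> linarith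

lemma abs_eval_le_abs_add_abs_add_abs (a b c : ℝ) {x y : ℝ} (hx : |x| ≤ 1) (hy : |y| ≤ 1) :
    |a * x ^ 2 + b * x * y + c * y ^ 2| ≤ |a| + |b| + |c| := by
  have hxy : |x * y| ≤ 1 := by rw [abs_mul]; exact mul_le_one₀ hx (abs_nonneg y) hy
  have hx2 : |x ^ 2| ≤ 1 := by rw [abs_pow]; exact pow_le_one₀ (abs_nonneg x) hx
  have hy2 : |y ^ 2| ≤ 1 := by rw [abs_pow]; exact pow_le_one₀ (abs_nonneg y) hy
  calc |a * x ^ 2 + b * x * y + c * y ^ 2|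
      ≤ |a| * |x ^ 2| + |b| * |x * y| + |c| * |y ^ 2| := by
        rw [mul_assoc b, ← abs_mul, ← abs_mul, ← abs_mul]; exact abs_add_three _ _ _
    _ ≤ |a| + |b| + |c| := by
      gcongr <;> exact mul_le_of_le_one_right (abs_nonneg _) ‹_›

lemma abs_eval_le_supNormInf (a b c : ℝ) {x y : ℝ} (hx : |x| ≤ 1) (hy : |y| ≤ 1) :
    |a * x ^ 2 + b * x * y + c * y ^ 2| ≤ supNormInf a b c :=
  le_csSup ⟨|a| + |b| + |c|, by
    rintro z ⟨x, y, hx, hy, rfl⟩; exact abs_eval_le_abs_add_abs_add_abs a b c hx hy⟩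
    ⟨x, y, hx, hy, rfl⟩

lemma supNormInf_nonneg (a b c : ℝ) : 0 ≤ supNormInf a b c :=
  (abs_nonneg _).trans (abs_eval_le_supNormInf a b c (x := 0) (y := 0) (by simp) (by simp))

lemma supNormInf_le {a b c M : ℝ}
    (h : ∀ x y : ℝ, |x| ≤ 1 → |y| ≤ 1 → |a * x ^ 2 + b * x * y + c * y ^ 2| ≤ M) :
    supNormInf a b c ≤ M :=
  csSup_le ⟨_, 0, 0, by simp, by simp, rfl⟩ (by rintro z ⟨x, y, hx, hy, rfl⟩; exact h x y hx hy)

lemma abs_one_sub_sq_mul_add_le_two_mul_supNormInf (a b c : ℝ) {t : ℝ} (ht : |t| ≤ 1) :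
    |(1 - t ^ 2) * (a - c) + 2 * t * b| ≤ 2 * supNormInf a b c := by
  have h₁ := abs_eval_le_supNormInf a b c abs_one.le ht
  have h₂ := abs_eval_le_supNormInf a b c ht (by norm_num : |(-1 : ℝ)| ≤ 1)
  calc |(1 - t ^ 2) * (a - c) + 2 * t * b|
      = |(a * 1 ^ 2 + b * 1 * t + c * t ^ 2) - (a * t ^ 2 + b * t * (-1) + c * (-1) ^ 2)| := by
        ring_nf
    _ ≤ 2 * supNormInf a b c := by linarith [abs_sub _ _ |>.trans (add_le_add h₁ h₂)]

lemma abs_add_sub_le_one_add_sqrt_two_mul_supNormInf (a b c : ℝ) {β : ℝ} (hβ : β = b ∨ β = -b) :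
    |a + β - c| ≤ (1 + √2) * supNormInf a b c := by
  have hs : √2 ^ 2 = 2 := sq_sqrt zero_le_two
  have hs₁ : 1 < √2 := one_lt_sqrt_two
  have hs₂ : √2 < 2 := by nlinarith
  obtain ⟨t, ht, heq⟩ : ∃ t : ℝ, |t| ≤ 1 ∧
      (1 - t ^ 2) * (a - c) + 2 * t * b = 2 * (√2 - 1) * (a + β - c) := by
    rcases hβ with rfl | rfl
    · exact ⟨√2 - 1, abs_le.mpr ⟨by linarith, by linarith⟩, by linear_combination (c - a) * hs⟩
    · exact ⟨-(√2 - 1), abs_le.mpr ⟨by linarith, by linarith⟩, by linear_combination (c - a) * hs⟩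
  have h := abs_one_sub_sq_mul_add_le_two_mul_supNormInf a b c ht
  rw [heq, abs_mul, abs_of_pos (by linarith : 0 < 2 * (√2 - 1))] at h
  calc |a + β - c| = (1 + √2) / 2 * (2 * (√2 - 1) * |a + β - c|) := by
        linear_combination (-|a + β - c|) * hs
    _ ≤ (1 + √2) / 2 * (2 * supNormInf a b c) := by gcongr
    _ = (1 + √2) * supNormInf a b c := by ring

lemma abs_add_abs_add_abs_le_one_add_sqrt_two_mul_supNormInf (a b c : ℝ) :
    |a| + |b| + |c| ≤ (1 + √2) * supNormInf a b c := by
  have hS : supNormInf a b c ≤ (1 + √2) * supNormInf a b c :=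
    le_mul_of_one_le_left (supNormInf_nonneg a b c) (by linarith [sqrt_nonneg 2])
  have h₁ := abs_eval_le_supNormInf a b c abs_one.le abs_one.le
  have h₂ := abs_eval_le_supNormInf a b c abs_one.le (by norm_num : |(-1 : ℝ)| ≤ 1)
  refine abs_add_abs_add_abs_le_of_abs_le ?_ ?_
    (abs_add_sub_le_one_add_sqrt_two_mul_supNormInf a b c (.inl rfl))
    (by simpa only [← sub_eq_add_neg] using
      abs_add_sub_le_one_add_sqrt_two_mul_supNormInf a b c (.inr rfl))
  · exact hS.trans' (by simpa using h₁)
  · exact hS.trans' (by simpa [← sub_eq_add_neg] using h₂)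

lemma supNormInf_extremal_eq_one :
    supNormInf ((2 + √2) / 4) (√2 / 2) (-((2 + √2) / 4)) = 1 := by
  have hs : √2 ^ 2 = 2 := sq_sqrt zero_le_two
  have hs₁ : 1 < √2 := one_lt_sqrt_two
  apply le_antisymm
  · refine supNormInf_le fun x y hx hy => abs_le.mpr ⟨?_, ?_⟩
    · have hy2 : y ^ 2 ≤ 1 := (sq_le_one_iff_abs_le_one y).mpr hy
      have hsq : 4 * (2 - √2) * (y ^ 2 + ((2 + √2) / 4 * x ^ 2 + √2 / 2 * x * y
          + -((2 + √2) / 4) * y ^ 2)) = ((2 - √2) * y + √2 * x) ^ 2 := by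
        linear_combination (-2 * x ^ 2) * hs
      nlinarith [sq_nonneg ((2 - √2) * y + √2 * x)]
    · have hx2 : x ^ 2 ≤ 1 := (sq_le_one_iff_abs_le_one x).mpr hx
      have hsq : 4 * (2 - √2) * (x ^ 2 - ((2 + √2) / 4 * x ^ 2 + √2 / 2 * x * y
          + -((2 + √2) / 4) * y ^ 2)) = ((2 - √2) * x - √2 * y) ^ 2 := by
        linear_combination (-2 * y ^ 2) * hs
      nlinarith [sq_nonneg ((2 - √2) * x - √2 * y)]
  · have ht : |√2 - 1| ≤ 1 := abs_le.mpr ⟨by linarith, by nlinarith⟩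
    have h := abs_eval_le_supNormInf ((2 + √2) / 4) (√2 / 2) (-((2 + √2) / 4))
      abs_one.le ht
    rwa [show (2 + √2) / 4 * 1 ^ 2 + √2 / 2 * 1 * (√2 - 1) + -((2 + √2) / 4) * (√2 - 1) ^ 2 = 1 by
      linear_combination ((2 - √2) / 4) * hs, abs_one] at h

theorem stmt4 :
    (∀ a b c : ℝ, |a| + |b| + |c| ≤ (1 + Real.sqrt 2) * supNormInf a b c) ∧
    |((2 + Real.sqrt 2) / 4)| + |(Real.sqrt 2 / 2)| + |(-((2 + Real.sqrt 2) / 4))| =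
      (1 + Real.sqrt 2) *
        supNormInf ((2 + Real.sqrt 2) / 4) (Real.sqrt 2 / 2) (-((2 + Real.sqrt 2) / 4)) := by
  refine ⟨abs_add_abs_add_abs_le_one_add_sqrt_two_mul_supNormInf, ?_⟩
  have hk : 0 ≤ (2 + √2) / 4 := by positivity
  rw [supNormInf_extremal_eq_one, abs_neg, abs_of_nonneg hk,
    abs_of_nonneg (by positivity : 0 ≤ √2 / 2)]
  ring
end

section
/- For every 2-homogeneous polynomial P(x,y) = a·x² + b·xy + c·y² with real coefficients and every q ≥ 2, (|a|^q + |b|^q + |c|^q)^{1/q} ≤ 4 · ‖P‖_1, where ‖P‖_1 = sup{|P(x,y)| : |x| + |y| ≤ 1}, and the constant 4 is optimal (attained by P(x,y) = 4xy). -/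
/-!
Evaluating `P` at `(1, 0)`, `(0, 1)` and `(1/2, ±1/2)` gives `|a|, |c|, |a ± b + c| / 4 ≤ ‖P‖₁`,
hence `(a + c)² + b² ≤ 16 ‖P‖₁²`. If `|a - c| ≤ |b|`, then `t = 1/2 + (a - c) / (2b)` lies in
`[0, 1]`, and `P(t, 1 - t) - P(1 - t, -t) = (b² + (a - c)²) / (2b)` yields
`b² + (a - c)² ≤ 4 |b| ‖P‖₁ ≤ 16 ‖P‖₁²`; otherwise `|b| < |a - c| ≤ 2 ‖P‖₁`. Adding the two bounds
gives `a² + b² + c² ≤ 16 ‖P‖₁²`, and the `ℓ_q` norm is at most the `ℓ₂` norm for `q ≥ 2`.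
For `4xy` the bound is attained since `4 |x y| ≤ (|x| + |y|)²`.
-/

/-- Sup norm of `a·x² + b·xy + c·y²` over the unit ball of `ℓ₁²`. -/
noncomputable def supNormOne (a b c : ℝ) : ℝ :=
  sSup {z : ℝ | ∃ x y : ℝ, |x| + |y| ≤ 1 ∧ z = |a * x ^ 2 + b * x * y + c * y ^ 2|}

open Finset in
theorem Real.sum_rpow_le_rpow_of_sum_rpow_le {ι : Type*} {s : Finset ι} {f : ι → ℝ} {p q B : ℝ}
    (hf : ∀ i ∈ s, 0 ≤ f i) (hB : 0 ≤ B) (hp : 0 < p) (hpq : p ≤ q)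
    (h : ∑ i ∈ s, f i ^ p ≤ B ^ p) : ∑ i ∈ s, f i ^ q ≤ B ^ q := by
  have hq : q ≠ 0 := (hp.trans_le hpq).ne'
  have hfB : ∀ i ∈ s, f i ≤ B := fun i hi =>
    (Real.rpow_le_rpow_iff (hf i hi) hB hp).mp <|
      (single_le_sum (fun j hj => Real.rpow_nonneg (hf j hj) p) hi).trans h
  have split : ∀ x : ℝ, 0 ≤ x → x ^ q = x ^ p * x ^ (q - p) := fun x hx => by
    rw [← Real.rpow_add' hx (by simpa using hq), add_sub_cancel]
  calc ∑ i ∈ s, f i ^ q ≤ ∑ i ∈ s, f i ^ p * B ^ (q - p) := by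
        refine sum_le_sum fun i hi => ?_
        rw [split _ (hf i hi)]
        exact mul_le_mul_of_nonneg_left (Real.rpow_le_rpow (hf i hi) (hfB i hi) (by linarith))
          (Real.rpow_nonneg (hf i hi) p)
    _ = (∑ i ∈ s, f i ^ p) * B ^ (q - p) := (sum_mul ..).symm
    _ ≤ B ^ p * B ^ (q - p) := by gcongr
    _ = B ^ q := (split B hB).symm

lemma supNormOne_bddAbove (a b c : ℝ) :
    BddAbove {z : ℝ | ∃ x y : ℝ, |x| + |y| ≤ 1 ∧ z = |a * x ^ 2 + b * x * y + c * y ^ 2|} := by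
  refine ⟨|a| + |b| + |c|, ?_⟩
  rintro z ⟨x, y, hxy, rfl⟩
  have hx : |x| ≤ 1 := by linarith [abs_nonneg y]
  have hy : |y| ≤ 1 := by linarith [abs_nonneg x]
  calc |a * x ^ 2 + b * x * y + c * y ^ 2|
      ≤ |a * x ^ 2| + |b * x * y| + |c * y ^ 2| := abs_add_three _ _ _
    _ = |a| * |x| ^ 2 + |b| * (|x| * |y|) + |c| * |y| ^ 2 := by
        simp only [abs_mul, abs_pow, mul_assoc]
    _ ≤ |a| * 1 + |b| * 1 + |c| * 1 := by
        gcongr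
        · exact pow_le_one₀ (abs_nonneg x) hx
        · exact mul_le_one₀ hx (abs_nonneg y) hy
        · exact pow_le_one₀ (abs_nonneg y) hy
    _ = |a| + |b| + |c| := by ring

lemma abs_le_supNormOne {a b c x y : ℝ} (h : |x| + |y| ≤ 1) :
    |a * x ^ 2 + b * x * y + c * y ^ 2| ≤ supNormOne a b c :=
  le_csSup (supNormOne_bddAbove a b c) ⟨x, y, h, rfl⟩

lemma abs_le_supNormOne_of_eq {a b c x y v : ℝ} (h : |x| + |y| ≤ 1)
    (hv : a * x ^ 2 + b * x * y + c * y ^ 2 = v) : |v| ≤ supNormOne a b c :=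
  hv ▸ abs_le_supNormOne h

section
variable (a b c : ℝ)

lemma abs_left_le_supNormOne : |a| ≤ supNormOne a b c :=
  abs_le_supNormOne_of_eq (x := 1) (y := 0) (by norm_num) (by ring)

lemma abs_right_le_supNormOne : |c| ≤ supNormOne a b c :=
  abs_le_supNormOne_of_eq (x := 0) (y := 1) (by norm_num) (by ring)

lemma supNormOne_nonneg : 0 ≤ supNormOne a b c :=
  (abs_nonneg a).trans (abs_left_le_supNormOne a b c)

lemma abs_add_add_le_supNormOne : |a + b + c| ≤ 4 * supNormOne a b c := by
  have := abs_le_supNormOne_of_eq (a := a) (b := b) (c := c) (x := 1 / 2) (y := 1 / 2)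
    (v := (a + b + c) / 4) (by norm_num [abs_of_pos]) (by ring)
  rw [abs_div, abs_of_pos (four_pos : (0 : ℝ) < 4), div_le_iff₀ four_pos] at this
  linarith

lemma abs_sub_add_le_supNormOne : |a - b + c| ≤ 4 * supNormOne a b c := by
  have := abs_le_supNormOne_of_eq (a := a) (b := b) (c := c) (x := 1 / 2) (y := -(1 / 2))
    (v := (a - b + c) / 4) (by norm_num [abs_of_pos]) (by ring)
  rw [abs_div, abs_of_pos (four_pos : (0 : ℝ) < 4), div_le_iff₀ four_pos] at this
  linarith

lemma sq_add_add_sq_le_supNormOne : (a + c) ^ 2 + b ^ 2 ≤ 16 * supNormOne a b c ^ 2 := by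
  have h₁ := pow_le_pow_left₀ (abs_nonneg _) (abs_add_add_le_supNormOne a b c) 2
  have h₂ := pow_le_pow_left₀ (abs_nonneg _) (abs_sub_add_le_supNormOne a b c) 2
  rw [sq_abs] at h₁ h₂
  linear_combination (h₁ + h₂) / 2

lemma sq_add_sq_sub_le_of_abs_sub_le (h : |a - c| ≤ |b|) :
    b ^ 2 + (a - c) ^ 2 ≤ 4 * |b| * supNormOne a b c := by
  rcases eq_or_ne b 0 with rfl | hb
  · have : a - c = 0 := abs_nonpos_iff.mp (by simpa using h)
    simp [this]
  set t := 1 / 2 + (a - c) / (2 * b) with ht_def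
  have ht : |(a - c) / (2 * b)| ≤ 1 / 2 := by
    rw [abs_div, abs_mul, abs_two, div_le_iff₀ (by positivity)]
    linarith
  have ht₀ : 0 ≤ t := by linarith [(abs_le.mp ht).1]
  have ht₁ : 0 ≤ 1 - t := by linarith [(abs_le.mp ht).2]
  have hP₁ := abs_le_supNormOne (a := a) (b := b) (c := c) (x := t) (y := 1 - t)
    (by rw [abs_of_nonneg ht₀, abs_of_nonneg ht₁]; linarith)
  have hP₂ := abs_le_supNormOne (a := a) (b := b) (c := c) (x := 1 - t) (y := -t)
    (by rw [abs_of_nonneg ht₁, abs_neg, abs_of_nonneg ht₀]; linarith)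
  have hdiff : (a * t ^ 2 + b * t * (1 - t) + c * (1 - t) ^ 2)
      - (a * (1 - t) ^ 2 + b * (1 - t) * (-t) + c * (-t) ^ 2)
      = (b ^ 2 + (a - c) ^ 2) / (2 * b) := by
    rw [ht_def]; field_simp; ring
  have := (abs_sub _ _).trans (add_le_add hP₁ hP₂)
  rw [hdiff, abs_div, abs_mul, abs_two, abs_of_nonneg (by positivity),
    div_le_iff₀ (by positivity)] at this
  linarith

lemma sq_sub_add_sq_le_supNormOne : (a - c) ^ 2 + b ^ 2 ≤ 16 * supNormOne a b c ^ 2 := by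
  have hS := supNormOne_nonneg a b c
  rcases le_or_gt |a - c| |b| with h | h
  · have h₁ := sq_add_sq_sub_le_of_abs_sub_le a b c h
    have hb : |b| ≤ 4 * supNormOne a b c := by nlinarith [sq_abs b, abs_nonneg b, sq_nonneg (a - c)]
    nlinarith [abs_nonneg b]
  · have hac : |a - c| ≤ 2 * supNormOne a b c := by
      linarith [abs_sub a c, abs_left_le_supNormOne a b c, abs_right_le_supNormOne a b c]
    nlinarith [sq_abs b, sq_abs (a - c), abs_nonneg b]

lemma sq_add_sq_add_sq_le_supNormOne : a ^ 2 + b ^ 2 + c ^ 2 ≤ 16 * supNormOne a b c ^ 2 := by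
  linear_combination (sq_add_add_sq_le_supNormOne a b c + sq_sub_add_sq_le_supNormOne a b c) / 2

end

lemma supNormOne_zero_four_zero : supNormOne 0 4 0 = 1 := by
  refine IsGreatest.csSup_eq ⟨⟨1 / 2, 1 / 2, by norm_num [abs_of_pos], by norm_num⟩, ?_⟩
  rintro z ⟨x, y, hxy, rfl⟩
  have hx := abs_nonneg x
  have hy := abs_nonneg y
  calc |0 * x ^ 2 + 4 * x * y + 0 * y ^ 2| = 4 * (|x| * |y|) := by
        simp [abs_mul, mul_assoc]
    _ ≤ (|x| + |y|) ^ 2 := by nlinarith [sq_nonneg (|x| - |y|)]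
    _ ≤ 1 := pow_le_one₀ (by positivity) hxy

theorem stmt7 (q : ℝ) (hq : 2 ≤ q) :
    (∀ a b c : ℝ,
      (|a| ^ q + |b| ^ q + |c| ^ q) ^ (1 / q) ≤ 4 * supNormOne a b c) ∧
    (|(0 : ℝ)| ^ q + |(4 : ℝ)| ^ q + |(0 : ℝ)| ^ q) ^ (1 / q) = 4 * supNormOne 0 4 0 := by
  have hq₀ : q ≠ 0 := by positivity
  refine ⟨fun a b c => ?_, ?_⟩
  · have hB : 0 ≤ 4 * supNormOne a b c := by linarith [supNormOne_nonneg a b c]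
    have h₂ : ∑ i, ![|a|, |b|, |c|] i ^ (2 : ℝ) ≤ (4 * supNormOne a b c) ^ (2 : ℝ) := by
      simp only [Fin.sum_univ_three, Real.rpow_two, Matrix.cons_val, sq_abs]
      linarith [sq_add_sq_add_sq_le_supNormOne a b c]
    have hsum := Real.sum_rpow_le_rpow_of_sum_rpow_le
      (fun i _ => by fin_cases i <;> simp) hB two_pos hq h₂
    simp only [Fin.sum_univ_three, Matrix.cons_val] at hsum
    calc (|a| ^ q + |b| ^ q + |c| ^ q) ^ (1 / q) ≤ ((4 * supNormOne a b c) ^ q) ^ (1 / q) := by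
          gcongr
      _ = 4 * supNormOne a b c := by rw [one_div, Real.rpow_rpow_inv hB hq₀]
  · rw [supNormOne_zero_four_zero, abs_zero, Real.zero_rpow hq₀,
      abs_of_pos (four_pos : (0 : ℝ) < 4), zero_add, add_zero, one_div,
      Real.rpow_rpow_inv (by norm_num) hq₀, mul_one]
end
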